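/- arXiv:2211.03104 — 7 statements merged into one kernel-verified Lean document; each statement's English description precedes it below -/
import Mathlib

section
/- Let C and D be small categories with C having finite colimits, let G : C ⥤ D preserve finite colimits, let E and E' be categories with colimits of small filtered diagrams, and let ι : E ⥤ E' be a fully faithful functor preserving filtered colimits. Then for every functor H : C ⥤ E and every object d : D, the value at d of the pointwise left Kan extension Lan_G(H ⋙ ι) lies in the essential image of ι; consequently Lan_G(H ⋙ ι) factors through E up to natural isomorphism, as ι ∘ (Lan_G H) ≅ Lan_G(H ⋙ ι). -/
/-!
Since `C` has finite colimits and `G` preserves them, each comma category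
`CostructuredArrow G d` has finite colimits and is therefore filtered. The colimits computing
`Lan_G H` pointwise are thus filtered colimits, which `ι` preserves, so `Lan_G H ⋙ ι` is again a
pointwise left Kan extension of `H ⋙ ι` along `G`; uniqueness of Kan extensions identifies it with
`Lan_G (H ⋙ ι)`, whose values therefore lie in the essential image of `ι`.
-/

open CategoryTheory Limits

universe u

namespace CategoryTheory

instance CostructuredArrow.isFiltered_of_preservesFiniteColimits {C D : Type*} [Category C]
    [Category D] [HasFiniteColimits C] (G : C ⥤ D) [PreservesFiniteColimits G] (d : D) :
    IsFiltered (CostructuredArrow G d) :=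
  have : HasFiniteColimits (CostructuredArrow G d) :=
    ⟨fun _ _ _ => CostructuredArrow.hasColimitsOfShape⟩
  IsFiltered.of_hasFiniteColimits _

noncomputable def Functor.LeftExtension.IsPointwiseLeftKanExtension.compIso
    {A B C D : Type*} [Category A] [Category B] [Category C] [Category D]
    {L : A ⥤ C} {F : A ⥤ B} (G : B ⥤ D) [G.PreservesPointwiseLeftKanExtension F L]
    {F₁ : C ⥤ B} {α₁ : F ⟶ L ⋙ F₁} (h₁ : (LeftExtension.mk F₁ α₁).IsPointwiseLeftKanExtension)
    {F₂ : C ⥤ D} {α₂ : F ⋙ G ⟶ L ⋙ F₂}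
    (h₂ : (LeftExtension.mk F₂ α₂).IsPointwiseLeftKanExtension) :
    F₁ ⋙ G ≅ F₂ :=
  (StructuredArrow.proj _ _).mapIso
    ((h₁.postcompose G).isUniversal.uniqueUpToIso h₂.isUniversal)

end CategoryTheory

theorem stmt3_general {C D : Type u} [SmallCategory C] [SmallCategory D]
    [HasFiniteColimits C] (G : C ⥤ D) [PreservesFiniteColimits G]
    {E : Type*} [Category E]
    {E' : Type*} [Category E']
    (ι : E ⥤ E') [PreservesFilteredColimitsOfSize.{u, u} ι]
    (H : C ⥤ E)
    (L : D ⥤ E) (α : H ⟶ G ⋙ L)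
    (hL : (Functor.LeftExtension.mk L α).IsPointwiseLeftKanExtension)
    (L' : D ⥤ E') (α' : H ⋙ ι ⟶ G ⋙ L')
    (hL' : (Functor.LeftExtension.mk L' α').IsPointwiseLeftKanExtension) :
    (∀ d : D, ι.essImage (L'.obj d)) ∧ Nonempty (L ⋙ ι ≅ L') :=
  let e : L ⋙ ι ≅ L' := hL.compIso ι hL'
  ⟨fun d => ⟨L.obj d, ⟨e.app d⟩⟩, ⟨e⟩⟩

/-- Let `G : C ⥤ D` preserve finite colimits, `C` small with finite colimits, and let
`ι : E ⥤ E'` be a fully faithful functor preserving filtered colimits between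
categories with filtered colimits.  If `(L, α)` is a pointwise left Kan extension of
`H : C ⥤ E` along `G` and `(L', α')` is a pointwise left Kan extension of `H ⋙ ι`
along `G`, then every value of `L'` lies in the essential image of `ι`, and
consequently `L ⋙ ι ≅ L'`. -/
theorem stmt3 {C D : Type u} [SmallCategory C] [SmallCategory D]
    [HasFiniteColimits C] (G : C ⥤ D) [PreservesFiniteColimits G]
    {E : Type*} [Category E] [HasFilteredColimitsOfSize.{u, u} E]
    {E' : Type*} [Category E'] [HasFilteredColimitsOfSize.{u, u} E']
    (ι : E ⥤ E') [ι.Full] [ι.Faithful] [PreservesFilteredColimitsOfSize.{u, u} ι]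
    (H : C ⥤ E)
    (L : D ⥤ E) (α : H ⟶ G ⋙ L)
    (hL : (Functor.LeftExtension.mk L α).IsPointwiseLeftKanExtension)
    (L' : D ⥤ E') (α' : H ⋙ ι ⟶ G ⋙ L')
    (hL' : (Functor.LeftExtension.mk L' α').IsPointwiseLeftKanExtension) :
    (∀ d : D, ι.essImage (L'.obj d)) ∧ Nonempty (L ⋙ ι ≅ L') :=
  stmt3_general G ι H L α hL L' α' hL'
end

section
/- Let A and B be frames and let p : B → A be a surjective frame homomorphism whose right adjoint r : A → B (characterized by the Galois connection p b ≤ a ↔ b ≤ r a) preserves finite joins, i.e. r ⊥ = ⊥ and r (a ⊔ a') = r a ⊔ r a' for all a, a' in A. Let K be a coherent frame: its top element is compact, the meet of any two compact elements of K is compact, and every element of K is the supremum of the compact elements below it. Then every frame homomorphism f : K → A lifts along p: there exists a frame homomorphism g : K → B with p ∘ g = f. (Joyal's lemma: coherent locales are injective with respect to flat embeddings of locales.) -/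
/-- The December 2024 Mathlib definition of a compact element of a complete lattice. -/
def CompleteLattice.IsCompactElement {α : Type*} [CompleteLattice α] (k : α) :=
  ∀ s : Set α, k ≤ sSup s → ∃ t : Finset α, ↑t ⊆ s ∧ k ≤ t.sup id

/-!
Extend `r ∘ f` from the compact elements of `K`: `g u := ⨆ {r (f k) | k compact, k ≤ u}`.
Since `r` preserves finite meets (as a right adjoint) and finite joins (flatness), `r ∘ f` is a
bounded lattice homomorphism. Coherence of `K` then makes `g` a frame homomorphism: compactness of
`⊤` gives `g ⊤ = ⊤`, closure of compact elements under `⊓` together with the frame law in `B`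
gives `g (u ⊓ v) = g u ⊓ g v`, and compactness turns an arbitrary join into a finite one, which
`r ∘ f` preserves. Finally `p ∘ r = id` by surjectivity of `p`, so
`p (g u) = ⨆ {f k | k compact, k ≤ u} = f u`.
-/

namespace CompleteLattice

variable {K L : Type*} [CompleteLattice K]

def compactsBelow (u : K) : Set K :=
  {k | IsCompactElement k ∧ k ≤ u}

section

variable [CompleteLattice L]

def compactExtension (φ : K → L) (u : K) : L :=
  ⨆ k ∈ compactsBelow u, φ k

theorem compactExtension_le_iff {φ : K → L} {u : K} {b : L} :
    compactExtension φ u ≤ b ↔ ∀ k, IsCompactElement k → k ≤ u → φ k ≤ b := by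
  simp [compactExtension, compactsBelow, and_imp]

theorem le_compactExtension (φ : K → L) {k u : K} (hk : IsCompactElement k) (hku : k ≤ u) :
    φ k ≤ compactExtension φ u :=
  compactExtension_le_iff.1 le_rfl k hk hku

theorem compactExtension_mono (φ : K → L) : Monotone (compactExtension φ) := fun _ _ huv =>
  compactExtension_le_iff.2 fun _ hk hku => le_compactExtension φ hk (hku.trans huv)

theorem compactExtension_top (φ : TopHom K L) (htop : IsCompactElement (⊤ : K)) :
    compactExtension φ ⊤ = ⊤ :=
  top_le_iff.1 (map_top φ ▸ le_compactExtension φ htop le_rfl)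

theorem compactExtension_sSup (φ : SupBotHom K L)
    (hgen : ∀ u : K, u = sSup (compactsBelow u)) (s : Set K) :
    compactExtension φ (sSup s) = ⨆ x ∈ s, compactExtension φ x := by
  refine le_antisymm (compactExtension_le_iff.2 fun k hk hks => ?_)
    (iSup₂_le fun x hx => compactExtension_mono φ (le_sSup hx))
  have hs : sSup s ≤ sSup (⋃ x ∈ s, compactsBelow x) := sSup_le fun x hx =>
    (hgen x).le.trans (sSup_le_sSup (Set.subset_biUnion_of_mem (u := compactsBelow) hx))
  obtain ⟨t, hts, hkt⟩ := hk _ (hks.trans hs)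
  calc φ k ≤ φ (t.sup id) := OrderHomClass.mono φ hkt
    _ = t.sup φ := map_finset_sup φ t id
    _ ≤ ⨆ x ∈ s, compactExtension φ x := Finset.sup_le fun y hy => by
      obtain ⟨x, hx, hyx⟩ := Set.mem_iUnion₂.1 (hts hy)
      exact (le_compactExtension φ hyx.1 hyx.2).trans
        (le_iSup₂ (f := fun x _ => compactExtension φ x) x hx)

theorem compactExtension_eq_self {F : Type*} [FunLike F K L] [sSupHomClass F K L] (f : F)
    (hgen : ∀ u : K, u = sSup (compactsBelow u)) (u : K) :
    compactExtension f u = f u := by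
  conv_rhs => rw [hgen u, map_sSup, sSup_image]
  rfl

theorem map_compactExtension {M F : Type*} [CompleteLattice M] [FunLike F L M]
    [sSupHomClass F L M] (ψ : F) (φ : K → L) (u : K) :
    ψ (compactExtension φ u) = compactExtension (ψ ∘ φ) u :=
  map_iSup₂ ψ _

end

variable [Order.Frame L]

theorem compactExtension_inf (φ : InfHom K L)
    (hinf : ∀ k k' : K, IsCompactElement k → IsCompactElement k' → IsCompactElement (k ⊓ k'))
    (u v : K) : compactExtension φ (u ⊓ v) = compactExtension φ u ⊓ compactExtension φ v := by
  refine le_antisymm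
    (le_inf (compactExtension_mono φ inf_le_left) (compactExtension_mono φ inf_le_right)) ?_
  simp only [compactExtension, iSup_inf_eq, inf_iSup_eq]
  refine iSup₂_le fun k' hk' => iSup₂_le fun k hk => ?_
  rw [← map_inf]
  exact le_compactExtension φ (hinf _ _ hk.1 hk'.1) (inf_le_inf hk.2 hk'.2)

def compactExtensionFrameHom (φ : BoundedLatticeHom K L)
    (htop : IsCompactElement (⊤ : K))
    (hinf : ∀ k k' : K, IsCompactElement k → IsCompactElement k' → IsCompactElement (k ⊓ k'))
    (hgen : ∀ u : K, u = sSup (compactsBelow u)) : FrameHom K L where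
  toFun := compactExtension φ
  map_inf' := compactExtension_inf φ.toInfHom hinf
  map_top' := compactExtension_top φ.toBoundedOrderHom.toTopHom htop
  map_sSup' s := by
    rw [sSup_image]
    exact compactExtension_sSup φ.toSupBotHom hgen s

end CompleteLattice

open CompleteLattice

/-- Joyal's lemma: coherent frames are injective with respect to flat surjections of
frames.  If `p : B → A` is a surjective frame homomorphism whose right adjoint `r`
preserves finite joins, and `K` is a coherent frame (compact top, compact elements
closed under binary meets, every element a supremum of compact elements below it),
then every frame homomorphism `f : K → A` lifts along `p`. -/
theorem stmt4 {A B K : Type*} [Order.Frame A] [Order.Frame B] [Order.Frame K]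
    (p : FrameHom B A) (hp : Function.Surjective p)
    (r : A → B) (hgc : GaloisConnection p r)
    (hr_bot : r ⊥ = ⊥) (hr_sup : ∀ a a' : A, r (a ⊔ a') = r a ⊔ r a')
    (htop : CompleteLattice.IsCompactElement (⊤ : K))
    (hinf : ∀ k k' : K, CompleteLattice.IsCompactElement k →
      CompleteLattice.IsCompactElement k' → CompleteLattice.IsCompactElement (k ⊓ k'))
    (hgen : ∀ u : K, u = sSup {k | CompleteLattice.IsCompactElement k ∧ k ≤ u})
    (f : FrameHom K A) :
    ∃ g : FrameHom K B, ∀ u : K, p (g u) = f u := by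
  have hpr : ∀ a, p (r a) = a := fun a => by
    obtain ⟨b, rfl⟩ := hp a
    exact hgc.l_u_l_eq_l b
  let ρ : BoundedLatticeHom A B :=
    { toFun := r, map_sup' := hr_sup, map_inf' := fun _ _ => hgc.u_inf, map_top' := hgc.u_top,
      map_bot' := hr_bot }
  let φ : BoundedLatticeHom K B := ρ.comp f
  refine ⟨compactExtensionFrameHom φ htop hinf hgen, fun u => ?_⟩
  calc p (compactExtension φ u) = compactExtension (p ∘ φ) u := map_compactExtension p φ u
    _ = compactExtension f u := congrArg (compactExtension · u) (funext fun k => hpr (f k))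
    _ = f u := compactExtension_eq_self f hgen u
end

section
/- Let L be a frame. Consider, in the lattice of (order) ideals of L, the principal ideal map a ↦ ↓a (Order.Ideal.principal) and the supremum map σ sending an ideal I to sSup of its underlying set. Then: (1) the pair (σ, principal) forms a Galois connection, i.e. sSup I ≤ a if and only if I ≤ ↓a; (2) σ is surjective, since sSup ↓a = a for all a; (3) σ preserves binary meets: for ideals I and J, sSup (I ⊓ J) = (sSup I) ⊓ (sSup J); (4) the principal ideal map preserves finite joins: ↓⊥ is the bottom ideal and ↓(a ⊔ b) = ↓a ⊔ ↓b in the ideal lattice. (These facts exhibit every locale as a flat sublocale of the coherent locale of ideals of its frame.) -/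
namespace Order.Ideal

section SemilatticeSup

variable {P : Type*} [SemilatticeSup P] [IsCodirectedOrder P]

theorem principal_sup (a b : P) : principal (a ⊔ b) = principal a ⊔ principal b :=
  le_antisymm
    (principal_le_iff.2 ⟨a, mem_principal_self, b, mem_principal_self, le_rfl⟩)
    (sup_le (principal_le_iff.2 le_sup_left) (principal_le_iff.2 le_sup_right))

end SemilatticeSup

section CompleteLattice

variable {L : Type*} [CompleteLattice L]

theorem sSup_coe_principal (a : L) : sSup (principal a : Set L) = a :=
  csSup_Iic

theorem gc_sSup_coe_principal :
    GaloisConnection (fun I : Ideal L => sSup (I : Set L)) principal :=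
  fun _ _ => sSup_le_iff

theorem sSup_coe_surjective : Function.Surjective (fun I : Ideal L => sSup (I : Set L)) :=
  Function.LeftInverse.surjective sSup_coe_principal

end CompleteLattice

/-- In a frame, `sSup I ⊓ sSup J` is the join of the meets `i ⊓ j`, and each of these lies in
both `I` and `J` because ideals are down-closed. -/
theorem sSup_coe_inf {L : Type*} [Order.Frame L] (I J : Ideal L) :
    sSup ((I ⊓ J : Ideal L) : Set L) = sSup (I : Set L) ⊓ sSup (J : Set L) := by
  refine le_antisymm (le_inf (sSup_le_sSup fun _ h => h.1) (sSup_le_sSup fun _ h => h.2)) ?_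
  rw [sSup_inf_sSup]
  exact iSup₂_le fun p ⟨hi, hj⟩ => le_sSup ⟨I.lower inf_le_left hi, J.lower inf_le_right hj⟩

end Order.Ideal

open Order.Ideal in
/-- Every locale is a flat sublocale of the coherent locale of ideals of its frame:
for a frame `L`, the supremum map `σ : Ideal L → L` and the principal ideal map
`a ↦ ↓a` form a Galois connection, `σ` is surjective and preserves binary meets,
and the principal ideal map preserves finite joins. -/
theorem stmt7 {L : Type*} [Order.Frame L] :
    -- (1) (σ, principal) is a Galois connection
    GaloisConnection (fun I : Order.Ideal L => sSup (I : Set L)) Order.Ideal.principal ∧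
    -- (2) σ is surjective, since sSup ↓a = a
    (∀ a : L, sSup ((Order.Ideal.principal a : Order.Ideal L) : Set L) = a) ∧
    Function.Surjective (fun I : Order.Ideal L => sSup (I : Set L)) ∧
    -- (3) σ preserves binary meets
    (∀ I J : Order.Ideal L, sSup ((I ⊓ J : Order.Ideal L) : Set L) =
      sSup (I : Set L) ⊓ sSup (J : Set L)) ∧
    -- (4) principal preserves finite joins
    (Order.Ideal.principal (⊥ : L) = ⊥) ∧
    (∀ a b : L, Order.Ideal.principal (a ⊔ b) =
      Order.Ideal.principal a ⊔ Order.Ideal.principal b) :=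
  ⟨gc_sSup_coe_principal, sSup_coe_principal, sSup_coe_surjective, sSup_coe_inf,
    principal_bot, principal_sup⟩
end

section
/- Let X be a set and give Ultrafilter X the Stone topology, with basic open sets {U : Ultrafilter X | s ∈ U} for s : Set X. Define φ : Set X → Opens (Ultrafilter X) by φ(s) = {U | s ∈ U} and ψ : Opens (Ultrafilter X) → Set X by ψ(V) = {x : X | pure x ∈ V}. Then: (1) ψ preserves arbitrary unions and finite intersections (including the whole space), i.e. it is a frame homomorphism; (2) the pair (ψ, φ) is a Galois connection: ψ(V) ⊆ s if and only if V ⊆ φ(s); (3) ψ ∘ φ = id, so ψ is surjective; (4) φ preserves finite joins: φ(∅) = ∅ and φ(s ∪ t) = φ(s) ∪ φ(t) for all s, t : Set X. (These facts express that the canonical map from the discrete space X to its space of ultrafilters β(X) is a flat embedding of locales.) -/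
universe u

open TopologicalSpace

namespace Ultrafilter

variable {X : Type u}

def basicOpen (s : Set X) : Opens (Ultrafilter X) :=
  ⟨{U | s ∈ U}, ultrafilter_isOpen_basic s⟩

def preimagePure (V : Opens (Ultrafilter X)) : Set X :=
  {x | (pure x : Ultrafilter X) ∈ V}

theorem preimagePure_sSup (𝒱 : Set (Opens (Ultrafilter X))) :
    preimagePure (sSup 𝒱) = ⋃ V ∈ 𝒱, preimagePure V := by
  ext x
  simp [preimagePure, Opens.mem_sSup]

theorem preimagePure_basicOpen (s : Set X) : preimagePure (basicOpen s) = s := by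
  ext x
  exact mem_pure

-- `pure` tends to `U` along `U` itself, so an open set containing `U` pulls back along `pure`
-- to a member of `U`.
theorem gc_preimagePure_basicOpen :
    GaloisConnection (preimagePure : Opens (Ultrafilter X) → Set X) basicOpen := by
  intro V s
  constructor
  · intro hVs U hU
    exact Filter.mem_of_superset (tendsto_pure_self U (V.isOpen.mem_nhds hU)) hVs
  · intro hVs x hx
    exact mem_pure.mp (hVs hx)

theorem basicOpen_empty : basicOpen (∅ : Set X) = ⊥ := by
  ext U
  simp [basicOpen]

theorem basicOpen_union (s t : Set X) : basicOpen (s ∪ t) = basicOpen s ⊔ basicOpen t := by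
  ext U
  simp [basicOpen, union_mem_iff]

end Ultrafilter

/-- The canonical map from the discrete space `X` to its space of ultrafilters `β(X)`
is a flat embedding of locales: the induced map `ψ` on frames of opens (restriction
along `pure`) is a surjective frame homomorphism whose right adjoint `φ` (sending
`s : Set X` to the basic open `{U | s ∈ U}`) preserves finite joins. -/
theorem stmt8 (X : Type u) :
    let φ : Set X → Opens (Ultrafilter X) :=
      fun s => ⟨{U : Ultrafilter X | s ∈ U}, ultrafilter_isOpen_basic s⟩
    let ψ : Opens (Ultrafilter X) → Set X :=
      fun V => {x : X | (pure x : Ultrafilter X) ∈ V}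
    -- (1) ψ is a frame homomorphism
    (∀ 𝒱 : Set (Opens (Ultrafilter X)), ψ (sSup 𝒱) = ⋃ V ∈ 𝒱, ψ V) ∧
    (ψ ⊤ = Set.univ) ∧
    (∀ V W : Opens (Ultrafilter X), ψ (V ⊓ W) = ψ V ∩ ψ W) ∧
    -- (2) (ψ, φ) is a Galois connection
    GaloisConnection ψ φ ∧
    -- (3) ψ ∘ φ = id, so ψ is surjective
    (∀ s : Set X, ψ (φ s) = s) ∧
    Function.Surjective ψ ∧
    -- (4) φ preserves finite joins
    (φ ∅ = ⊥) ∧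
    (∀ s t : Set X, φ (s ∪ t) = φ s ⊔ φ t) :=
  ⟨Ultrafilter.preimagePure_sSup, rfl, fun _ _ => rfl, Ultrafilter.gc_preimagePure_basicOpen,
    Ultrafilter.preimagePure_basicOpen,
    Function.LeftInverse.surjective Ultrafilter.preimagePure_basicOpen,
    Ultrafilter.basicOpen_empty, Ultrafilter.basicOpen_union⟩
end

section
/- Let X be a set and give Ultrafilter X the Stone topology, with basic open sets {U : Ultrafilter X | s ∈ U} for s : Set X. The map Φ sending an order ideal I of the powerset lattice Set X to the open set ⋃_{s ∈ I} {U : Ultrafilter X | s ∈ U} is an order isomorphism from the poset of order ideals of Set X to the poset of open subsets of Ultrafilter X, with inverse sending an open set V to the ideal { s : Set X | {U | s ∈ U} ⊆ V }; moreover Φ sends the principal ideal ↓s to the basic open set {U | s ∈ U}. (The frame of opens of β(X) is the frame of ideals of the powerset of X.) -/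
universe u

open TopologicalSpace

/-!
The basic opens `{U | s ∈ U}` are closed, hence compact, and `s ↦ {U | s ∈ U}` is an order
embedding of `Set X` into the opens preserving finite unions. By compactness, a basic open
covered by the directed union attached to an ideal `I` already lies in a single basic open
`{U | t ∈ U}` with `t ∈ I`, so its index belongs to `I`; since the basic opens form a basis,
every open set is the union of the basic opens it contains.
-/

namespace Ultrafilter

variable {X : Type u}

theorem setOf_mem_subset_setOf_mem_iff {s t : Set X} :
    {U : Ultrafilter X | s ∈ U} ⊆ {U | t ∈ U} ↔ s ⊆ t :=
  ⟨fun h x hx => @h (pure x) hx, fun h U hU => U.mem_of_superset hU h⟩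

def opensOfIdeal (I : Order.Ideal (Set X)) : Opens (Ultrafilter X) :=
  ⟨⋃ s ∈ (I : Set (Set X)), {U | s ∈ U},
    isOpen_biUnion fun s _ => ultrafilter_isOpen_basic s⟩

def idealOfOpens (V : Opens (Ultrafilter X)) : Order.Ideal (Set X) :=
  Order.IsIdeal.toIdeal (I := {s : Set X | {U : Ultrafilter X | s ∈ U} ⊆ V})
    { IsLowerSet := fun _ _ hts hs => (setOf_mem_subset_setOf_mem_iff.2 hts).trans hs
      Nonempty := ⟨∅, fun U hU => absurd hU U.empty_notMem⟩
      Directed := fun s hs t ht =>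
        ⟨s ∪ t, fun _ hU => (union_mem_iff.1 hU).elim (@hs _) (@ht _),
          Set.subset_union_left, Set.subset_union_right⟩ }

theorem mem_of_setOf_mem_subset_opensOfIdeal {I : Order.Ideal (Set X)} {s : Set X}
    (h : {U : Ultrafilter X | s ∈ U} ⊆ opensOfIdeal I) : s ∈ I := by
  have : Nonempty I := ⟨⟨⊥, I.bot_mem⟩⟩
  obtain ⟨t, hst⟩ := (ultrafilter_isClosed_basic s).isCompact.elim_directed_cover
    (fun t : I => {U : Ultrafilter X | (t : Set X) ∈ U}) (fun _ => ultrafilter_isOpen_basic _)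
    (by simpa [opensOfIdeal, Set.iUnion_subtype] using h)
    (fun t t' => by
      obtain ⟨r, hr, htr, ht'r⟩ := I.directed _ t.2 _ t'.2
      exact ⟨⟨r, hr⟩, setOf_mem_subset_setOf_mem_iff.2 htr,
        setOf_mem_subset_setOf_mem_iff.2 ht'r⟩)
  exact I.lower (setOf_mem_subset_setOf_mem_iff.1 hst) t.2

theorem idealOfOpens_opensOfIdeal (I : Order.Ideal (Set X)) :
    idealOfOpens (opensOfIdeal I) = I :=
  Order.Ideal.ext <| Set.ext fun _ =>
    ⟨mem_of_setOf_mem_subset_opensOfIdeal, fun hs _ hU => Set.mem_biUnion hs hU⟩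

theorem opensOfIdeal_idealOfOpens (V : Opens (Ultrafilter X)) :
    opensOfIdeal (idealOfOpens V) = V := by
  refine le_antisymm (Set.iUnion₂_subset fun s hs => hs) fun U hU => ?_
  obtain ⟨_, ⟨s, rfl⟩, hUs, hsV⟩ :=
    ultrafilterBasis_is_basis.exists_subset_of_mem_open hU V.2
  exact Set.mem_biUnion (show s ∈ idealOfOpens V from hsV) hUs

theorem coe_opensOfIdeal_principal (s : Set X) :
    (opensOfIdeal (Order.Ideal.principal s) : Set (Ultrafilter X)) = {U | s ∈ U} :=
  Set.Subset.antisymm (Set.iUnion₂_subset fun _ ht => setOf_mem_subset_setOf_mem_iff.2 ht)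
    fun _ hU => Set.mem_biUnion (Order.Ideal.mem_principal.2 le_rfl) hU

def idealOrderIsoOpens : Order.Ideal (Set X) ≃o Opens (Ultrafilter X) :=
  Equiv.toOrderIso
    ⟨opensOfIdeal, idealOfOpens, idealOfOpens_opensOfIdeal, opensOfIdeal_idealOfOpens⟩
    (fun _ _ h => Set.biUnion_subset_biUnion_left h)
    (fun _ _ h s (hs : {U : Ultrafilter X | s ∈ U} ⊆ _) => hs.trans h)

end Ultrafilter

/-- The frame of opens of `β(X)` is the frame of ideals of the powerset of `X`:
the map sending an order ideal `I` of `Set X` to the open set `⋃ s ∈ I, {U | s ∈ U}`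
is an order isomorphism onto the opens of `Ultrafilter X`, with inverse
`V ↦ {s | {U | s ∈ U} ⊆ V}`, and it sends the principal ideal `↓s` to the basic open
`{U | s ∈ U}`. -/
theorem stmt9 (X : Type u) :
    ∃ e : Order.Ideal (Set X) ≃o Opens (Ultrafilter X),
      (∀ I : Order.Ideal (Set X),
        (e I : Set (Ultrafilter X)) = ⋃ s ∈ (I : Set (Set X)), {U : Ultrafilter X | s ∈ U}) ∧
      (∀ V : Opens (Ultrafilter X),
        ((e.symm V : Order.Ideal (Set X)) : Set (Set X)) =
          {s : Set X | {U : Ultrafilter X | s ∈ U} ⊆ (V : Set (Ultrafilter X))}) ∧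
      (∀ s : Set X,
        (e (Order.Ideal.principal s) : Set (Ultrafilter X)) = {U : Ultrafilter X | s ∈ U}) :=
  ⟨Ultrafilter.idealOrderIsoOpens, fun _ => rfl, fun _ => rfl,
    fun s => Ultrafilter.coe_opensOfIdeal_principal s⟩
end

section
/- Let C be a small category with finite limits and Psh(C) = Fun(Cᵒᵖ, Type) its presheaf category. Let (D, J) and (D', J') be small sites and 𝓛 = Sheaf(J, Type), 𝓛' = Sheaf(J', Type). Suppose i^* : 𝓛' ⥤ 𝓛 preserves finite limits and has a fully faithful right adjoint i_* : 𝓛 ⥤ 𝓛' (i.e., the geometric morphism i : 𝓛 → 𝓛' is an embedding of topoi). Then for every functor x^* : Psh(C) ⥤ 𝓛 which preserves finite limits and admits a right adjoint, there exists a functor h^* : Psh(C) ⥤ 𝓛' which preserves finite limits, admits a right adjoint, and satisfies h^* ⋙ i^* ≅ x^*. Moreover h^* can be taken to be the pointwise left Kan extension along the Yoneda embedding y : C ⥤ Psh(C) of the composite y ⋙ x^* ⋙ i_* : C ⥤ 𝓛'. (Presheaf topoi over finitely complete categories are injective with respect to embeddings of topoi.) -/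
open CategoryTheory Limits

universe u

/-!
A cocontinuous functor out of `Cᵒᵖ ⥤ Type u` is determined by its restriction along the Yoneda
embedding `y`, and every Yoneda extension `Lan_y A` into a cocomplete category is a left adjoint.
So `h^* := Lan_y (y ⋙ x^* ⋙ i_*)` is a left adjoint, and `h^* ⋙ i^* ≅ x^*` because both sides
are cocontinuous and agree on representables, as `i_* ⋙ i^* ≅ 𝟭`.

Left exactness of `Lan_y A` for left exact `A : C ⥤ Sh(J')` reduces to presheaves, since
`Lan_y A ≅ Lan_y (A ⋙ ι) ⋙ a` for the inclusion `ι` of sheaves and its left exact reflector `a`,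
and then, evaluating pointwise, to `A : C ⥤ Type u`. There `A.Elements` is cofiltered and `Lan_y A` sends `P` to the colimit of
`P` over `(A.Elements)ᵒᵖ`; filtered colimits in `Type u` commute with finite limits.
-/

namespace CategoryTheory.Functor

lemma isLeftKanExtension_iff_of_iso₁ {C D H : Type*} [Category C] [Category D] [Category H]
    {L L' : C ⥤ D} (e : L ≅ L') {F : C ⥤ H} (F' : D ⥤ H) (α : F ⟶ L ⋙ F') :
    F'.IsLeftKanExtension α ↔ F'.IsLeftKanExtension (α ≫ whiskerRight e.hom F') := by
  let eq : (LeftExtension.mk _ α).IsUniversal ≃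
      (LeftExtension.mk _ (α ≫ whiskerRight e.hom F')).IsUniversal :=
    (IsInitial.isInitialIffObj (leftExtensionEquivalenceOfIso₁ e F).functor _).trans
      (IsInitial.equivOfIso
        (StructuredArrow.isoMk (Iso.refl _) (by ext; exact Category.comp_id _)))
  exact ⟨fun _ => ⟨⟨eq (isUniversalOfIsLeftKanExtension _ _)⟩⟩,
    fun _ => ⟨⟨eq.symm (isUniversalOfIsLeftKanExtension _ _)⟩⟩⟩

end CategoryTheory.Functor

namespace CategoryTheory.Presheaf

variable {C : Type u} [SmallCategory C]

section

variable {ℰ : Type*} [Category.{u} ℰ] [HasColimitsOfSize.{u, u} ℰ]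

lemma isLeftAdjoint_of_isLeftKanExtension_yoneda {A : C ⥤ ℰ} (L : (Cᵒᵖ ⥤ Type u) ⥤ ℰ)
    (α : A ⟶ yoneda ⋙ L) [L.IsLeftKanExtension α] : L.IsLeftAdjoint :=
  have := (Functor.isLeftKanExtension_iff_of_iso₁ uliftYonedaIsoYoneda.{u}.symm L α).1 ‹_›
  ⟨_, ⟨uliftYonedaAdjunction.{u} L
    (α ≫ Functor.whiskerRight uliftYonedaIsoYoneda.{u}.symm.hom L)⟩⟩

instance (A : C ⥤ ℰ) : (yoneda.leftKanExtension A).IsLeftAdjoint :=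
  isLeftAdjoint_of_isLeftKanExtension_yoneda _ (yoneda.leftKanExtensionUnit A)

instance (A : C ⥤ ℰ) : PreservesColimitsOfSize.{u, u} (yoneda.leftKanExtension A) :=
  (Adjunction.ofIsLeftAdjoint _).leftAdjoint_preservesColimits

lemma isLeftKanExtension_yoneda_of_preservesColimits {A : C ⥤ ℰ} (L : (Cᵒᵖ ⥤ Type u) ⥤ ℰ)
    [PreservesColimitsOfSize.{u, u} L] (e : A ≅ yoneda ⋙ L) : L.IsLeftKanExtension e.hom :=
  (Functor.isLeftKanExtension_iff_of_iso₁ uliftYonedaIsoYoneda.{u}.symm L e.hom).2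
    (isLeftKanExtension_of_preservesColimits L
      (e ≪≫ Functor.isoWhiskerRight uliftYonedaIsoYoneda.{u}.symm L))

instance (A : C ⥤ ℰ) : IsIso (yoneda.leftKanExtensionUnit A) :=
  (Functor.isPointwiseLeftKanExtensionOfIsLeftKanExtension (yoneda.leftKanExtension A)
    (yoneda.leftKanExtensionUnit A)).isIso_hom

noncomputable def isExtensionAlongYoneda (A : C ⥤ ℰ) :
    yoneda ⋙ yoneda.leftKanExtension A ≅ A :=
  (asIso (yoneda.leftKanExtensionUnit A)).symm

noncomputable def isoOfPreservesColimits {L L' : (Cᵒᵖ ⥤ Type u) ⥤ ℰ}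
    [PreservesColimitsOfSize.{u, u} L] [PreservesColimitsOfSize.{u, u} L']
    (e : yoneda ⋙ L ≅ yoneda ⋙ L') : L ≅ L' :=
  have := isLeftKanExtension_yoneda_of_preservesColimits L (Iso.refl _)
  have := isLeftKanExtension_yoneda_of_preservesColimits L' e
  Functor.leftKanExtensionUnique L (Iso.refl _).hom L' e.hom

end

lemma preservesFiniteLimits_yoneda_leftKanExtension_of_isCofiltered_elements
    (A : C ⥤ Type u) [IsCofiltered A.Elements] :
    PreservesFiniteLimits (yoneda.leftKanExtension A) := by
  let Φ := (Functor.whiskeringLeft _ _ (Type u)).obj (CategoryOfElements.π A).op ⋙ colim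
  have : IsFiltered A.Elementsᵒᵖ := isFiltered_op_of_isCofiltered _
  have : PreservesFiniteLimits Φ := comp_preservesFiniteLimits _ _
  have : PreservesColimitsOfSize.{u, u} Φ := comp_preservesColimits _ _
  have e : yoneda ⋙ Φ ≅ A := Functor.isoWhiskerRight shrinkYonedaIsoYoneda.symm Φ ≪≫
    Functor.Elements.shrinkYonedaCompWhiskeringLeftObjπCompColimIso A
  exact preservesFiniteLimits_of_natIso
    (isoOfPreservesColimits (e ≪≫ (isExtensionAlongYoneda A).symm))

lemma preservesFiniteLimits_yoneda_leftKanExtension_of_preservesFiniteLimits [HasFiniteLimits C]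
    {K : Type u} [SmallCategory K] (B : C ⥤ K ⥤ Type u) [PreservesFiniteLimits B] :
    PreservesFiniteLimits (yoneda.leftKanExtension B) := by
  refine ⟨fun J _ _ => preservesLimitsOfShape_of_evaluation _ J fun k => ?_⟩
  let Bk := B ⋙ (evaluation K (Type u)).obj k
  have := Functor.isCofiltered_elements Bk
  have := preservesFiniteLimits_yoneda_leftKanExtension_of_isCofiltered_elements Bk
  have e : yoneda ⋙ yoneda.leftKanExtension Bk ≅
      yoneda ⋙ yoneda.leftKanExtension B ⋙ (evaluation K (Type u)).obj k :=
    isExtensionAlongYoneda Bk ≪≫ Functor.isoWhiskerRight (isExtensionAlongYoneda B).symm _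
  exact preservesLimitsOfShape_of_natIso (isoOfPreservesColimits e)

variable {ℰ D : Type*} [Category.{u} ℰ] [Category.{u} D] [HasColimitsOfSize.{u, u} ℰ]
  [HasColimitsOfSize.{u, u} D]

noncomputable def yonedaLeftKanExtensionCompReflectorIso {a : D ⥤ ℰ} {ι : ℰ ⥤ D}
    (adj : a ⊣ ι) [ι.Full] [ι.Faithful] (A : C ⥤ ℰ) :
    yoneda.leftKanExtension (A ⋙ ι) ⋙ a ≅ yoneda.leftKanExtension A :=
  have := adj.leftAdjoint_preservesColimits
  isoOfPreservesColimits <| (Functor.associator _ _ _).symm ≪≫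
    Functor.isoWhiskerRight (isExtensionAlongYoneda (A ⋙ ι)) a ≪≫ Functor.associator _ _ _ ≪≫
    Functor.isoWhiskerLeft A (asIso adj.counit) ≪≫ A.rightUnitor ≪≫
    (isExtensionAlongYoneda A).symm

lemma preservesFiniteLimits_yoneda_leftKanExtension_of_reflective [HasFiniteLimits C]
    {K : Type u} [SmallCategory K] {a : (K ⥤ Type u) ⥤ ℰ} {ι : ℰ ⥤ K ⥤ Type u}
    (adj : a ⊣ ι) [ι.Full] [ι.Faithful] [PreservesFiniteLimits a]
    (A : C ⥤ ℰ) [PreservesFiniteLimits A] :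
    PreservesFiniteLimits (yoneda.leftKanExtension A) := by
  have := adj.rightAdjoint_preservesLimits
  have := preservesFiniteLimits_yoneda_leftKanExtension_of_preservesFiniteLimits (A ⋙ ι)
  exact preservesFiniteLimits_of_natIso (yonedaLeftKanExtensionCompReflectorIso adj A)

end CategoryTheory.Presheaf

-- A shortcut: synthesizing this through `Sheaf.instHasColimitsOfSize` times out.
instance {D : Type u} [SmallCategory D] (J : GrothendieckTopology D) :
    HasColimitsOfSize.{u, u} (Sheaf J (Type u)) :=
  Sheaf.instHasColimitsOfSize

theorem stmt11_general
    {C : Type u} [SmallCategory C] [HasFiniteLimits C]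
    {D : Type u} [SmallCategory D] {J : GrothendieckTopology D}
    {D' : Type u} [SmallCategory D'] {J' : GrothendieckTopology D'}
    (iup : Sheaf J' (Type u) ⥤ Sheaf J (Type u))
    (ist : Sheaf J (Type u) ⥤ Sheaf J' (Type u))
    (adj_i : iup ⊣ ist) [ist.Full] [ist.Faithful]
    (xup : (Cᵒᵖ ⥤ Type u) ⥤ Sheaf J (Type u)) [PreservesFiniteLimits xup]
    (xst : Sheaf J (Type u) ⥤ (Cᵒᵖ ⥤ Type u)) (adj_x : xup ⊣ xst) :
    ∃ (hup : (Cᵒᵖ ⥤ Type u) ⥤ Sheaf J' (Type u))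
      (α : yoneda ⋙ xup ⋙ ist ⟶ yoneda ⋙ hup),
      PreservesFiniteLimits hup ∧ hup.IsLeftAdjoint ∧
      Nonempty (hup ⋙ iup ≅ xup) ∧
      Nonempty (Functor.LeftExtension.IsPointwiseLeftKanExtension
        (Functor.LeftExtension.mk hup α)) := by
  have := adj_i.rightAdjoint_preservesLimits
  have := adj_x.leftAdjoint_preservesColimits
  refine ⟨yoneda.leftKanExtension (yoneda ⋙ xup ⋙ ist), yoneda.leftKanExtensionUnit _,
    ?_, inferInstance, ⟨?_⟩,
    ⟨Functor.isPointwiseLeftKanExtensionOfIsLeftKanExtension _ _⟩⟩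
  · exact Presheaf.preservesFiniteLimits_yoneda_leftKanExtension_of_reflective
      (sheafificationAdjunction J' (Type u)) _
  · exact Presheaf.yonedaLeftKanExtensionCompReflectorIso adj_i (yoneda ⋙ xup) ≪≫
      Presheaf.isoOfPreservesColimits (Presheaf.isExtensionAlongYoneda _)

/-- Presheaf topoi over small finitely complete categories are injective with respect
to embeddings of topoi: given an embedding of topoi `i : 𝓛 → 𝓛'` (inverse image
`i^* = iup` preserving finite limits, fully faithful direct image `i_* = ist`) and a
geometric morphism `x : 𝓛 → Psh(C)` (inverse image `x^* = xup`), there is a geometric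
morphism `h : 𝓛' → Psh(C)` with `h^* ⋙ i^* ≅ x^*`; moreover `h^*` can be taken to be
the pointwise left Kan extension along the Yoneda embedding of
`yoneda ⋙ x^* ⋙ i_* : C ⥤ 𝓛'`. -/
theorem stmt11
    {C : Type u} [SmallCategory C] [HasFiniteLimits C]
    {D : Type u} [SmallCategory D] {J : GrothendieckTopology D}
    {D' : Type u} [SmallCategory D'] {J' : GrothendieckTopology D'}
    (iup : Sheaf J' (Type u) ⥤ Sheaf J (Type u))
    (ist : Sheaf J (Type u) ⥤ Sheaf J' (Type u))
    (adj_i : iup ⊣ ist) [ist.Full] [ist.Faithful] [PreservesFiniteLimits iup]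
    (xup : (Cᵒᵖ ⥤ Type u) ⥤ Sheaf J (Type u)) [PreservesFiniteLimits xup]
    (xst : Sheaf J (Type u) ⥤ (Cᵒᵖ ⥤ Type u)) (adj_x : xup ⊣ xst) :
    ∃ (hup : (Cᵒᵖ ⥤ Type u) ⥤ Sheaf J' (Type u))
      (α : yoneda ⋙ xup ⋙ ist ⟶ yoneda ⋙ hup),
      PreservesFiniteLimits hup ∧ hup.IsLeftAdjoint ∧
      Nonempty (hup ⋙ iup ≅ xup) ∧
      Nonempty (Functor.LeftExtension.IsPointwiseLeftKanExtension
        (Functor.LeftExtension.mk hup α)) :=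
  stmt11_general iup ist adj_i xup xst adj_x
end

section
/- Let C be a small category, 𝓕 a category, and 𝓖 a cocomplete category. Suppose given adjunctions x^* ⊣ x_* with x^* : Psh(C) ⥤ 𝓕 and x_* : 𝓕 ⥤ Psh(C), and i^* ⊣ i_* with i^* : 𝓖 ⥤ 𝓕 and i_* : 𝓕 ⥤ 𝓖. Let h^* : Psh(C) ⥤ 𝓖 be the pointwise left Kan extension along the Yoneda embedding y : C ⥤ Psh(C) of the composite y ⋙ x^* ⋙ i_* : C ⥤ 𝓖, and let h_* : 𝓖 ⥤ Psh(C) be its right adjoint, given by h_*(g)(c) = Hom_𝓖(i_*(x^*(y c)), g). Then h_*, equipped with the canonical natural transformation x_* ⟶ i_* ⋙ h_* induced by the adjunctions, is a left Kan extension of x_* along i_*: for every functor T : 𝓖 ⥤ Psh(C), natural transformations x_* ⟶ i_* ⋙ T correspond bijectively to natural transformations h_* ⟶ T by composition with the canonical transformation. -/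
/-!
By the Yoneda lemma, a transformation `τ : h_* ⟶ T` is determined by the elements
`τ (𝟙) ∈ T (i_* x^* (y c)) (c)`, and every family of such elements that is natural in `c`
comes from some `τ`. Since `x_* f (c) ≅ 𝓕(x^* (y c), f)`, a transformation
`σ : x_* ⟶ i_* ⋙ T` is likewise determined by its values on the unit elements
`η_c ∈ x_* x^* (y c) (c)`, and these values form such a natural family. The canonical `α` sends
`η_c` to `𝟙`, so composing with `α` identifies the two descriptions.
-/

open CategoryTheory Limits Opposite

universe u v w

/-- The restricted Yoneda functor `ℰ ⥤ Cᵒᵖ ⥤ Type v₁` as it stood in Mathlib (Dec 2024). -/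
def CategoryTheory.Presheaf.restrictedYoneda {C : Type u} [Category.{v} C] {ℰ : Type w}
    [Category.{v} ℰ] (A : C ⥤ ℰ) : ℰ ⥤ Cᵒᵖ ⥤ Type v :=
  yoneda ⋙ (Functor.whiskeringLeft _ _ (Type v)).obj (Functor.op A)

namespace CategoryTheory.Presheaf

variable {C : Type u} [Category.{v} C] {ℰ : Type w} [Category.{v} ℰ] {A : C ⥤ ℰ}
  {T : ℰ ⥤ Cᵒᵖ ⥤ Type v}

lemma restrictedYoneda_natTrans_app_app (τ : restrictedYoneda A ⟶ T) {g : ℰ} {c : C}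
    (φ : A.obj c ⟶ g) :
    (τ.app g).app (op c) φ = (T.map φ).app (op c) ((τ.app (A.obj c)).app (op c) (𝟙 _)) := by
  have naturality :
      (τ.app g).app (op c) (((restrictedYoneda A).map φ).app (op c) (𝟙 (A.obj c))) =
      (T.map φ).app (op c) ((τ.app (A.obj c)).app (op c) (𝟙 (A.obj c))) :=
    ConcreteCategory.congr_hom (NatTrans.naturality_app τ (op c) φ) (𝟙 (A.obj c))
  rwa [show ((restrictedYoneda A).map φ).app (op c) (𝟙 (A.obj c)) = φ from
    Category.id_comp φ] at naturality

lemma restrictedYoneda_hom_ext {τ τ' : restrictedYoneda A ⟶ T}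
    (h : ∀ c, (τ.app (A.obj c)).app (op c) (𝟙 (A.obj c)) =
      (τ'.app (A.obj c)).app (op c) (𝟙 (A.obj c))) : τ = τ' := by
  ext g ⟨c⟩ φ
  exact (restrictedYoneda_natTrans_app_app τ φ).trans
    (h c ▸ (restrictedYoneda_natTrans_app_app τ' φ).symm)

variable (t : ∀ c : C, (T.obj (A.obj c)).obj (op c))
  (ht : ∀ ⦃c c' : C⦄ (u : c ⟶ c'),
    (T.map (A.map u)).app (op c) (t c) = (T.obj (A.obj c')).map u.op (t c'))

def restrictedYonedaDesc : restrictedYoneda A ⟶ T where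
  app g :=
    { app c := TypeCat.ofHom fun (φ : A.obj c.unop ⟶ g) => (T.map φ).app c (t c.unop)
      naturality c c' u := by
        ext (φ : A.obj c.unop ⟶ g)
        dsimp [restrictedYoneda]
        rw [T.map_comp, NatTrans.comp_app, types_comp_apply, ht, NatTrans.naturality_apply]
        rfl }
  naturality g g' m := by
    ext c (φ : A.obj c.unop ⟶ g)
    dsimp [restrictedYoneda]
    rw [T.map_comp, NatTrans.comp_app, types_comp_apply]

lemma restrictedYonedaDesc_app_app_id (c : C) :
    ((restrictedYonedaDesc t ht).app (A.obj c)).app (op c) (𝟙 (A.obj c)) = t c := by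
  show (T.map (𝟙 (A.obj c))).app (op c) (t c) = t c
  rw [T.map_id]
  rfl

end CategoryTheory.Presheaf

namespace CategoryTheory.Adjunction

variable {C : Type u} [Category.{v} C] {𝓕 : Type w} [Category 𝓕]
  {F : (Cᵒᵖ ⥤ Type v) ⥤ 𝓕} {G : 𝓕 ⥤ Cᵒᵖ ⥤ Type v} (adj : F ⊣ G)

def unitElement (c : C) : (G.obj (F.obj (yoneda.obj c))).obj (Opposite.op c) :=
  yonedaEquiv (adj.unit.app (yoneda.obj c))

lemma homEquiv_symm_yonedaEquiv_symm_unitElement (c : C) :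
    (adj.homEquiv (yoneda.obj c) _).symm (yonedaEquiv.symm (adj.unitElement c)) = 𝟙 _ := by
  rw [unitElement, Equiv.symm_apply_apply, ← homEquiv_id, Equiv.symm_apply_apply]

lemma map_homEquiv_symm_app_unitElement {f : 𝓕} {c : C} (ξ : (G.obj f).obj (Opposite.op c)) :
    (G.map ((adj.homEquiv (yoneda.obj c) f).symm (yonedaEquiv.symm ξ))).app (Opposite.op c)
      (adj.unitElement c) = ξ := by
  rw [unitElement, ← yonedaEquiv_comp, ← homEquiv_unit, Equiv.apply_symm_apply,
    Equiv.apply_symm_apply]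

lemma map_app_unitElement {c c' : C} (u : c ⟶ c') :
    (G.map (F.map (yoneda.map u))).app (Opposite.op c) (adj.unitElement c) =
      (G.obj (F.obj (yoneda.obj c'))).map u.op (adj.unitElement c') := by
  rw [unitElement, unitElement, ← yonedaEquiv_comp, yonedaEquiv_naturality, unit_naturality]

variable {S : 𝓕 ⥤ Cᵒᵖ ⥤ Type v}

lemma natTrans_app_app_eq_map_app_unitElement (σ : G ⟶ S) {f : 𝓕} {c : C}
    (ξ : (G.obj f).obj (Opposite.op c)) :
    (σ.app f).app (Opposite.op c) ξ =
      (S.map ((adj.homEquiv (yoneda.obj c) f).symm (yonedaEquiv.symm ξ))).app (Opposite.op c)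
        ((σ.app _).app (Opposite.op c) (adj.unitElement c)) := by
  rw [← NatTrans.comp_app_apply, ← σ.naturality, NatTrans.comp_app_apply,
    map_homEquiv_symm_app_unitElement]

lemma map_app_app_unitElement (σ : G ⟶ S) {c c' : C} (u : c ⟶ c') :
    (S.map (F.map (yoneda.map u))).app (Opposite.op c)
        ((σ.app _).app (Opposite.op c) (adj.unitElement c)) =
      (S.obj (F.obj (yoneda.obj c'))).map u.op
        ((σ.app _).app (Opposite.op c') (adj.unitElement c')) := by
  rw [← NatTrans.comp_app_apply, ← σ.naturality, NatTrans.comp_app_apply, map_app_unitElement,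
    NatTrans.naturality_apply]

lemma natTrans_ext_of_unitElement {σ σ' : G ⟶ S}
    (h : ∀ c, (σ.app (F.obj (yoneda.obj c))).app (Opposite.op c) (adj.unitElement c) =
      (σ'.app (F.obj (yoneda.obj c))).app (Opposite.op c) (adj.unitElement c)) : σ = σ' := by
  ext f ⟨c⟩ ξ
  exact (adj.natTrans_app_app_eq_map_app_unitElement σ ξ).trans
    (h c ▸ (adj.natTrans_app_app_eq_map_app_unitElement σ' ξ).symm)

end CategoryTheory.Adjunction

lemma comp_whiskerLeft_app_app_unitElement {C : Type u} [Category.{v} C] {𝓕 : Type*}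
    [Category 𝓕] {𝓖 : Type w} [Category.{v} 𝓖] {F : (Cᵒᵖ ⥤ Type v) ⥤ 𝓕}
    {G : 𝓕 ⥤ Cᵒᵖ ⥤ Type v} {adj : F ⊣ G} {I : 𝓕 ⥤ 𝓖}
    {α : G ⟶ I ⋙ Presheaf.restrictedYoneda (yoneda ⋙ F ⋙ I)}
    (hα : ∀ (f : 𝓕) (c : C) (ξ : (G.obj f).obj (op c)),
      (α.app f).app (op c) ξ = I.map ((adj.homEquiv (yoneda.obj c) f).symm (yonedaEquiv.symm ξ)))
    {T : 𝓖 ⥤ Cᵒᵖ ⥤ Type v} (τ : Presheaf.restrictedYoneda (yoneda ⋙ F ⋙ I) ⟶ T)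
    (c : C) :
    ((α ≫ Functor.whiskerLeft I τ).app (F.obj (yoneda.obj c))).app (op c) (adj.unitElement c) =
      (τ.app (I.obj (F.obj (yoneda.obj c)))).app (op c) (𝟙 _) := by
  rw [NatTrans.comp_app, NatTrans.comp_app_apply, hα,
    adj.homEquiv_symm_yonedaEquiv_symm_unitElement, I.map_id]
  rfl

theorem stmt12_general {C : Type u} [SmallCategory C]
    {𝓕 : Type v} [Category.{u} 𝓕] {𝓖 : Type w} [Category.{u} 𝓖]
    (xup : (Cᵒᵖ ⥤ Type u) ⥤ 𝓕) (xst : 𝓕 ⥤ (Cᵒᵖ ⥤ Type u)) (adj_x : xup ⊣ xst)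
    (ist : 𝓕 ⥤ 𝓖)
    (α : xst ⟶ ist ⋙ Presheaf.restrictedYoneda (yoneda ⋙ xup ⋙ ist))
    (hα : ∀ (f : 𝓕) (c : C) (ξ : (xst.obj f).obj (Opposite.op c)),
      (α.app f).app (Opposite.op c) ξ =
        ist.map ((adj_x.homEquiv (yoneda.obj c) f).symm (yonedaEquiv.symm ξ))) :
    ∀ T : 𝓖 ⥤ (Cᵒᵖ ⥤ Type u),
      Function.Bijective
        (fun τ : (Presheaf.restrictedYoneda (yoneda ⋙ xup ⋙ ist) ⟶ T) =>
          α ≫ CategoryTheory.Functor.whiskerLeft ist τ) := by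
  intro T
  have value_at_unit := comp_whiskerLeft_app_app_unitElement hα (T := T)
  refine ⟨fun τ τ' h => Presheaf.restrictedYoneda_hom_ext fun c => ?_, fun σ =>
    ⟨Presheaf.restrictedYonedaDesc _ fun c c' u => adj_x.map_app_app_unitElement σ u,
      adj_x.natTrans_ext_of_unitElement fun c => ?_⟩⟩
  · exact (value_at_unit τ c).symm.trans
      ((congrArg (fun σ => (σ.app _).app (op c) (adj_x.unitElement c)) h).trans
        (value_at_unit τ' c))
  · exact (value_at_unit _ c).trans (Presheaf.restrictedYonedaDesc_app_app_id _ _ c)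

/-- Given adjunctions `x^* ⊣ x_*` (with `x^* : Psh(C) ⥤ 𝓕`) and `i^* ⊣ i_*`
(with `i^* : 𝓖 ⥤ 𝓕`, `𝓖` cocomplete), let `h_* : 𝓖 ⥤ Psh(C)` be the restricted
Yoneda functor of `yoneda ⋙ x^* ⋙ i_* : C ⥤ 𝓖`, i.e. `h_*(g)(c) = 𝓖(i_* x^* (y c), g)`
(the right adjoint of the pointwise left Kan extension of `yoneda ⋙ x^* ⋙ i_*` along
the Yoneda embedding).  Then `h_*`, equipped with the canonical natural transformation
`α : x_* ⟶ i_* ⋙ h_*` induced by the adjunctions, is a left Kan extension of `x_*`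
along `i_*`: for every `T : 𝓖 ⥤ Psh(C)`, composition with `α` is a bijection from
natural transformations `h_* ⟶ T` to natural transformations `x_* ⟶ i_* ⋙ T`. -/
theorem stmt12 {C : Type u} [SmallCategory C]
    {𝓕 : Type v} [Category.{u} 𝓕] {𝓖 : Type w} [Category.{u} 𝓖] [HasColimits 𝓖]
    (xup : (Cᵒᵖ ⥤ Type u) ⥤ 𝓕) (xst : 𝓕 ⥤ (Cᵒᵖ ⥤ Type u)) (adj_x : xup ⊣ xst)
    (iup : 𝓖 ⥤ 𝓕) (ist : 𝓕 ⥤ 𝓖) (adj_i : iup ⊣ ist)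
    (α : xst ⟶ ist ⋙ Presheaf.restrictedYoneda (yoneda ⋙ xup ⋙ ist))
    (hα : ∀ (f : 𝓕) (c : C) (ξ : (xst.obj f).obj (Opposite.op c)),
      (α.app f).app (Opposite.op c) ξ =
        ist.map ((adj_x.homEquiv (yoneda.obj c) f).symm (yonedaEquiv.symm ξ))) :
    ∀ T : 𝓖 ⥤ (Cᵒᵖ ⥤ Type u),
      Function.Bijective
        (fun τ : (Presheaf.restrictedYoneda (yoneda ⋙ xup ⋙ ist) ⟶ T) =>
          α ≫ CategoryTheory.Functor.whiskerLeft ist τ) :=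
  stmt12_general xup xst adj_x ist α hα
end
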